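/- For all α with 0 < α < 1, the quantity (3α² − 15α + 12)/(4(α − 4)) is strictly negative; equivalently, in the manufacturer-led recycling model the direct-channel price p_m^{M*} = −(2α + 2c_m + Δα − αc_m + αs)/(α − 4) is strictly less than the indirect-channel price p_r^{M*} = −(8c_m − 7α + 4Δα − 4αc_m + 4αs + 3α² + 12)/(4(α − 4)), since their difference equals (3α² − 15α + 12)/(4(α − 4)). -/
import Mathlib

/-- Model M: direct-channel price is strictly below indirect-channel price. -/
theorem modelM_price_comparison (α c_m Δ s : ℝ)
    (hα0 : 0 < α) (hα1 : α < 1) (hc : 0 < c_m) (hΔ : 0 < Δ) (hs : 0 < s) :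
    (3 * α ^ 2 - 15 * α + 12) / (4 * (α - 4)) < 0 ∧
    (-(2 * α + 2 * c_m + Δ * α - α * c_m + α * s) / (α - 4)) -
      (-(8 * c_m - 7 * α + 4 * Δ * α - 4 * α * c_m + 4 * α * s + 3 * α ^ 2 + 12) /
        (4 * (α - 4))) =
      (3 * α ^ 2 - 15 * α + 12) / (4 * (α - 4)) ∧
    -(2 * α + 2 * c_m + Δ * α - α * c_m + α * s) / (α - 4) <
      -(8 * c_m - 7 * α + 4 * Δ * α - 4 * α * c_m + 4 * α * s + 3 * α ^ 2 + 12) /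
        (4 * (α - 4)) := by
  have h4 : α - 4 < 0 := by linarith
  have hne : α - 4 ≠ 0 := ne_of_lt h4
  have h1 : (3 * α ^ 2 - 15 * α + 12) / (4 * (α - 4)) < 0 := by
    apply div_neg_of_pos_of_neg
    · nlinarith
    · linarith
  have h2 : (-(2 * α + 2 * c_m + Δ * α - α * c_m + α * s) / (α - 4)) -
      (-(8 * c_m - 7 * α + 4 * Δ * α - 4 * α * c_m + 4 * α * s + 3 * α ^ 2 + 12) /
        (4 * (α - 4))) = (3 * α ^ 2 - 15 * α + 12) / (4 * (α - 4)) := by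
    field_simp
    ring
  exact ⟨h1, h2, by linarith [h2 ▸ h1]⟩
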